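/- Let S_n be the Generalized Tribonacci-Lucas sequence (S_0 = -Q/R, S_1 = 3, S_2 = P) with distinct characteristic roots α, β, γ, and let w = e^(2πi/n). Suppose αw^(-j), βw^(-j), γw^(-j) are all ≠ 1. Then the sum over k = 0, ..., n-1 of S_{k+1}·w^(-jk) equals (S_{n+1} - 3 + (S_{n+2} - P·S_{n+1} + 2P)·w^(-j) + (R·S_n + Q)·w^(-2j)) / (P·w^(-j) + Q·w^(-2j) + R·w^(-3j) - 1). -/
import Mathlib

open Complex Finset

lemma tribo_key (P Q R : ℂ) (S : ℕ → ℂ)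
    (hrec : ∀ n, S (n + 3) = P * S (n + 2) + Q * S (n + 1) + R * S n)
    (x : ℂ) : ∀ m : ℕ,
    (P * x + Q * x ^ 2 + R * x ^ 3 - 1) * ∑ k ∈ Finset.range m, S (k + 1) * x ^ k =
      S (m + 1) * x ^ m + (S (m + 2) - P * S (m + 1)) * x ^ (m + 1)
        + (S (m + 3) - P * S (m + 2) - Q * S (m + 1)) * x ^ (m + 2)
        - (S 1 + (S 2 - P * S 1) * x + (S 3 - P * S 2 - Q * S 1) * x ^ 2) := by
  intro m
  induction m with
  | zero => simp
  | succ m ih =>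
      rw [Finset.sum_range_succ, mul_add, ih]
      have h4 : S (m + 4) = P * S (m + 3) + Q * S (m + 2) + R * S (m + 1) := hrec (m + 1)
      simp only [show m + 1 + 1 = m + 2 from rfl, show m + 1 + 2 = m + 3 from rfl,
        show m + 1 + 3 = m + 4 from rfl]
      linear_combination (-(x ^ (m + 3))) * h4

theorem eigenvalue_circulant_generalized_tribonacci_lucas
    (P Q R : ℂ) (hR : R ≠ 0) (S : ℕ → ℂ)
    (hS0 : S 0 = -Q / R) (hS1 : S 1 = 3) (hS2 : S 2 = P)
    (hrec : ∀ n, S (n + 3) = P * S (n + 2) + Q * S (n + 1) + R * S n)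
    (α β γ : ℂ)
    (hαβ : α ≠ β) (hαγ : α ≠ γ) (hβγ : β ≠ γ)
    (hsum : α + β + γ = P) (hprod2 : α * β + β * γ + α * γ = -Q)
    (hprod : α * β * γ = R)
    (n : ℕ) (hn : 0 < n) (j : ℕ) (hj : j < n)
    (w : ℂ) (hw : w = Complex.exp (2 * Real.pi * Complex.I / n))
    (hα : α * w ^ (-(j : ℤ)) ≠ 1) (hβ' : β * w ^ (-(j : ℤ)) ≠ 1)
    (hγ' : γ * w ^ (-(j : ℤ)) ≠ 1)
    (hden : P * w ^ (-(j : ℤ)) + Q * w ^ (-2 * (j : ℤ)) + R * w ^ (-3 * (j : ℤ)) - 1 ≠ 0) :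
    ∑ k ∈ Finset.range n, S (k + 1) * w ^ (-((j : ℤ) * k)) =
      (S (n + 1) - 3 + (S (n + 2) - P * S (n + 1) + 2 * P) * w ^ (-(j : ℤ))
        + (R * S n + Q) * w ^ (-2 * (j : ℤ)))
      / (P * w ^ (-(j : ℤ)) + Q * w ^ (-2 * (j : ℤ)) + R * w ^ (-3 * (j : ℤ)) - 1) := by
  set x : ℂ := w ^ (-(j : ℤ)) with hx
  have hw0 : w ≠ 0 := by rw [hw]; exact Complex.exp_ne_zero _
  have hwn : w ^ n = 1 := by
    rw [hw, ← Complex.exp_nat_mul]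
    have hn0 : (n : ℂ) ≠ 0 := Nat.cast_ne_zero.mpr hn.ne'
    rw [mul_div_cancel₀ _ hn0]
    simpa [mul_comm] using Complex.exp_two_pi_mul_I
  have hxk : ∀ k : ℕ, w ^ (-((j : ℤ) * k)) = x ^ k := by
    intro k
    rw [hx, ← zpow_natCast (w ^ (-(j:ℤ))) k, ← zpow_mul]
    ring_nf
  have hx2 : w ^ (-2 * (j : ℤ)) = x ^ 2 := by
    rw [hx, ← zpow_natCast (w ^ (-(j:ℤ))) 2, ← zpow_mul]; ring_nf
  have hx3 : w ^ (-3 * (j : ℤ)) = x ^ 3 := by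
    rw [hx, ← zpow_natCast (w ^ (-(j:ℤ))) 3, ← zpow_mul]; ring_nf
  have hxn : x ^ n = 1 := by
    rw [hx, ← zpow_natCast (w ^ (-(j:ℤ))) n, ← zpow_mul, mul_comm, zpow_mul,
      zpow_natCast, hwn, one_zpow]
  have hx1 : x ^ 1 = x := pow_one x
  rw [hx2, hx3] at hden ⊢
  simp only [hxk]
  rw [eq_div_iff hden]
  have key := tribo_key P Q R S hrec x n
  have en1 : x ^ (n + 1) = x := by rw [pow_succ, hxn, one_mul]
  have en2 : x ^ (n + 2) = x ^ 2 := by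
    rw [show n + 2 = (n + 1) + 1 from rfl, pow_succ, en1, ← pow_two]
  rw [hxn, en1, en2] at key
  have hS0' : R * S 0 = -Q := by rw [hS0]; field_simp
  have hS3 : S 3 = P * S 2 + Q * S 1 + R * S 0 := hrec 0
  have hrn : S (n + 3) = P * S (n + 2) + Q * S (n + 1) + R * S n := hrec n
  linear_combination key + x ^ 2 * hrn - x ^ 2 * hS0' + (P * x - 1 + Q * x ^ 2 - P * x ^ 2 * P) * hS1 + (x ^ 2 * P - x) * hS2 - x ^ 2 * hS3 + (P ^ 2 - Q) * x ^ 2 * hS1 + (-(P * x ^ 2)) * hS2
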